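/- Let d ≥ 1, let X and X' be aperiodic minimal subshifts over nonempty finite alphabets, and let h : SX → SX' be a homeomorphism with h(ι(X)) = ι'(X'). Let c be the cocycle of h. Then: (a) for every ω ∈ X and every n ∈ ℤ^d, the vector c(ι(ω), n) lies in ℤ^d (it is a return vector for X'); and (b) for every λ > 0 there exists ν ∈ ℕ such that for all n ∈ ℤ^d with ‖n‖ ≤ λ and all ω₁, ω₂ ∈ X satisfying ω₁(j) = ω₂(j) for all j ∈ B_ν, one has c(ι(ω₁), n) = c(ι(ω₂), n). In particular, for each fixed n ∈ ℤ^d, the map ω ↦ c(ι(ω), n) is locally constant on X and has finite range. -/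

import Mathlib

/-!
Two points of `ι'(X')` on a common orbit differ by a lattice vector, and `h` maps `ι(X)` into
`ι'(X')`; this gives integrality. The substance is a uniform bound on `c` over
`SX × {‖x‖ ≤ R}`. First, `x ↦ c(T, x)` is continuous: in a local product chart `X' × ball`
of `SX'` the `X'`-coordinate of a connected path is constant, `X'` being totally
disconnected, so the path is read off in the `ball` coordinate. Second, by compactness of `SX`
and freeness of the action, `‖c(T, x)‖` never takes the value `1` for `x` near `0`, uniformly
in `T`, hence stays below `1` there; the cocycle identity propagates this to all `x` with
`‖x‖ ≤ R`. So for fixed `n`, `ω ↦ c(ι ω, n)` takes finitely many values, each on the closed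
set `{ω | h(ι(σⁿω)) = v +ᵥ h(ι ω)}`, and is therefore locally constant. On the compact space
`X` it then depends only on the coordinates in a box, uniformly over the finitely many `n`
with `‖n‖ ≤ λ`.
-/

open Filter Topology

abbrev Zd (d : ℕ) := Fin d → ℤ
abbrev Rd (d : ℕ) := EuclideanSpace ℝ (Fin d)

def toRd {d : ℕ} (n : Zd d) : Rd d := WithLp.toLp 2 (fun i => (n i : ℝ))

def shift {d : ℕ} {A : Type*} (n : Zd d) (ω : Zd d → A) : Zd d → A := fun k => ω (k - n)

structure IsSubshift {d : ℕ} {A : Type*} [TopologicalSpace A] (X : Set (Zd d → A)) : Prop where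
  nonempty : X.Nonempty
  closed : IsClosed X
  shift_mem : ∀ n : Zd d, ∀ ω ∈ X, shift n ω ∈ X

def IsMinimal {d : ℕ} {A : Type*} [TopologicalSpace A] (X : Set (Zd d → A)) : Prop :=
  ∀ ω ∈ X, X ⊆ closure {ω' | ∃ n : Zd d, ω' = shift n ω}

def IsAperiodic {d : ℕ} {A : Type*} (X : Set (Zd d → A)) : Prop :=
  ∀ ω ∈ X, ∀ n : Zd d, shift n ω = ω → n = 0

def suspRel {d : ℕ} {A : Type*} [TopologicalSpace A] (X : Set (Zd d → A)) :
    X × Rd d → X × Rd d → Prop :=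
  fun p q => ∃ n : Zd d, (q.1 : Zd d → A) = shift n (p.1 : Zd d → A) ∧ q.2 = p.2 - toRd n

abbrev Susp {d : ℕ} {A : Type*} [TopologicalSpace A] (X : Set (Zd d → A)) :=
  Quot (suspRel X)

instance {d : ℕ} {A : Type*} [TopologicalSpace A] (X : Set (Zd d → A)) :
    VAdd (Rd d) (Susp X) where
  vadd t := Quot.lift (fun p => Quot.mk (suspRel X) (p.1, p.2 + t))
    (fun p q hpq => by
      obtain ⟨n, h1, h2⟩ := hpq
      exact Quot.sound ⟨n, h1, by rw [h2]; exact sub_add_eq_add_sub _ _ _⟩)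

def iota {d : ℕ} {A : Type*} [TopologicalSpace A] (X : Set (Zd d → A)) : X → Susp X :=
  fun ω => Quot.mk _ (ω, 0)

def box (d : ℕ) (n : ℕ) : Set (Zd d) := {k | ∀ i, |k i| ≤ (n : ℤ)}

noncomputable def complexity {d : ℕ} {A : Type*} (X : Set (Zd d → A)) (n : ℕ) : ℕ :=
  Set.ncard ((fun ω => (fun k : box d n => ω k.1)) '' X)

noncomputable def repetitivity {d : ℕ} {A : Type*} (X : Set (Zd d → A)) (n : ℕ) : ℝ :=
  sInf {C : ℝ | 0 ≤ C ∧ ∀ ω ∈ X, ∀ ω₀ ∈ X, ∃ k : Zd d,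
    ‖toRd k‖ ≤ C ∧ ∀ j ∈ box d n, shift k ω j = ω₀ j}

def IsCocycleFor {d : ℕ} {A A' : Type*} [TopologicalSpace A] [TopologicalSpace A']
    {X : Set (Zd d → A)} {X' : Set (Zd d → A')}
    (h : Susp X ≃ₜ Susp X') (c : Susp X × Rd d → Rd d) : Prop :=
  ∀ (T : Susp X) (x : Rd d), h (x +ᵥ T) = c (T, x) +ᵥ h T

lemma isLocallyConstant_of_isClosed_fiber {α β : Type*} [TopologicalSpace α] {f : α → β}
    (hfin : (Set.range f).Finite) (hf : ∀ y, IsClosed (f ⁻¹' {y})) : IsLocallyConstant f := by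
  refine IsLocallyConstant.iff_isOpen_fiber.2 fun y => ?_
  have : (f ⁻¹' {y})ᶜ = ⋃ z ∈ Set.range f \ {y}, f ⁻¹' {z} := by
    ext x; simp [eq_comm]
  rw [← isClosed_compl_iff, this]
  exact hfin.sdiff.isClosed_biUnion fun z _ => hf z

section Lattice

variable {d : ℕ}

@[simp]
lemma toRd_apply (m : Zd d) (i : Fin d) : toRd m i = (m i : ℝ) := rfl

@[simp]
lemma toRd_zero : toRd (0 : Zd d) = 0 := by
  ext i; simp

@[simp]
lemma toRd_add (m n : Zd d) : toRd (m + n) = toRd m + toRd n := by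
  ext i; simp

@[simp]
lemma toRd_neg (m : Zd d) : toRd (-m) = -toRd m := by
  ext i; simp

lemma abs_le_norm_toRd (m : Zd d) (i : Fin d) : |(m i : ℝ)| ≤ ‖toRd m‖ := by
  simpa using PiLp.norm_apply_le (toRd m) i

lemma eq_zero_of_norm_toRd_lt_one {m : Zd d} (hm : ‖toRd m‖ < 1) : m = 0 := by
  funext i
  have : |(m i : ℝ)| < 1 := (abs_le_norm_toRd m i).trans_lt hm
  exact Int.abs_lt_one_iff.mp (by exact_mod_cast this)

lemma box_mono {ν ν' : ℕ} (h : ν ≤ ν') : box d ν ⊆ box d ν' :=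
  fun k hk i => (hk i).trans (by exact_mod_cast h)

lemma finite_box (ν : ℕ) : (box d ν).Finite := by
  refine (Set.Finite.pi fun _ => Set.finite_Icc (-(ν : ℤ)) ν).subset fun k hk i _ => ?_
  exact abs_le.mp (hk i)

lemma eventually_mem_box (k : Zd d) : ∀ᶠ ν in atTop, k ∈ box d ν :=
  eventually_all.2 fun i => (eventually_ge_atTop (k i).natAbs).mono fun ν hν => by
    rw [Int.abs_eq_natAbs]; exact_mod_cast hν

lemma finite_setOf_norm_toRd_le (R : ℝ) : {m : Zd d | ‖toRd m‖ ≤ R}.Finite := by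
  refine (finite_box ⌈R⌉₊).subset fun m hm i => ?_
  have : ((|m i| : ℤ) : ℝ) ≤ ⌈R⌉₊ := by
    rw [Int.cast_abs]; exact (abs_le_norm_toRd m i).trans (hm.trans (Nat.le_ceil R))
  exact_mod_cast this

end Lattice

section Cylinders

variable {d : ℕ} {A : Type*} [TopologicalSpace A] [DiscreteTopology A]

lemma hasBasis_nhds_box (ω : Zd d → A) :
    (𝓝 ω).HasBasis (fun _ : ℕ => True) fun ν => {ω' | ∀ j ∈ box d ν, ω' j = ω j} := by
  rw [nhds_pi, nhds_discrete A]
  refine (hasBasis_pi_pure ω).to_hasBasis (fun I hI => ?_)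
    fun ν _ => ⟨box d ν, finite_box ν, le_rfl⟩
  obtain ⟨ν, hν⟩ := ((eventually_all_finite hI).2 fun k _ => eventually_mem_box k).exists
  exact ⟨ν, trivial, fun ω' hω' k hk => hω' k (hν k hk)⟩

lemma IsLocallyConstant.exists_box_forall_eq {X : Set (Zd d → A)} [CompactSpace X]
    {β : Type*} {f : X → β} (hf : IsLocallyConstant f) :
    ∃ ν : ℕ, ∀ ω₁ ω₂ : X,
      (∀ j ∈ box d ν, (ω₁ : Zd d → A) j = (ω₂ : Zd d → A) j) → f ω₁ = f ω₂ := by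
  have hfib : ∀ ω : X, ∃ ν : ℕ, ∀ ω' : X,
      (∀ j ∈ box d ν, (ω' : Zd d → A) j = (ω : Zd d → A) j) → f ω' = f ω := fun ω => by
    have := (hf.isOpen_fiber (f ω)).mem_nhds rfl
    rw [nhds_subtype, ((hasBasis_nhds_box (ω : Zd d → A)).comap _).mem_iff] at this
    obtain ⟨ν, -, hν⟩ := this
    exact ⟨ν, fun ω' hω' => hν hω'⟩
  choose ν hν using hfib
  obtain ⟨t, -, ht⟩ := isCompact_univ.elim_nhds_subcover
    (fun ω : X => {ω' : X | ∀ j ∈ box d (ν ω), (ω' : Zd d → A) j = (ω : Zd d → A) j})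
    fun ω _ => by
      rw [nhds_subtype]
      exact preimage_mem_comap ((hasBasis_nhds_box (ω : Zd d → A)).mem_of_mem trivial)
  refine ⟨t.sup ν, fun ω₁ ω₂ h₁₂ => ?_⟩
  obtain ⟨ω, hωt, hω₁⟩ := Set.mem_iUnion₂.mp (ht (Set.mem_univ ω₁))
  have hbox : box d (ν ω) ⊆ box d (t.sup ν) := box_mono (Finset.le_sup hωt)
  have hω₂ : ∀ j ∈ box d (ν ω), (ω₂ : Zd d → A) j = (ω : Zd d → A) j :=
    fun j hj => (h₁₂ j (hbox hj)).symm.trans (hω₁ j hj)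
  rw [hν ω ω₁ hω₁, hν ω ω₂ hω₂]

end Cylinders

section Suspension

variable {d : ℕ} {A : Type*}

@[simp]
lemma shift_zero (ω : Zd d → A) : shift 0 ω = ω := by
  funext k; simp [shift]

lemma shift_shift (m n : Zd d) (ω : Zd d → A) : shift m (shift n ω) = shift (m + n) ω := by
  funext k; simp [shift, sub_sub]

variable [TopologicalSpace A] {X : Set (Zd d → A)}

lemma continuous_shift (n : Zd d) : Continuous (shift n : (Zd d → A) → Zd d → A) :=
  continuous_pi fun k => continuous_apply (k - n)

lemma suspRel_equivalence (X : Set (Zd d → A)) : Equivalence (suspRel X) where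
  refl p := ⟨0, by simp, by simp⟩
  symm := by
    rintro p q ⟨n, h₁, h₂⟩
    exact ⟨-n, by rw [h₁, shift_shift, neg_add_cancel, shift_zero],
      by rw [h₂, toRd_neg]; abel⟩
  trans := by
    rintro p q r ⟨m, h₁, h₂⟩ ⟨n, h₃, h₄⟩
    exact ⟨n + m, by rw [h₃, h₁, shift_shift], by rw [h₄, h₂, toRd_add]; abel⟩

lemma mk_eq_mk_iff {p q : X × Rd d} :
    Quot.mk (suspRel X) p = Quot.mk (suspRel X) q ↔ suspRel X p q :=
  Quot.eq.trans (suspRel_equivalence X).eqvGen_iff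

lemma vadd_mk (t : Rd d) (p : X × Rd d) :
    t +ᵥ Quot.mk (suspRel X) p = Quot.mk (suspRel X) (p.1, p.2 + t) := rfl

instance : AddAction (Rd d) (Susp X) where
  zero_vadd := by rintro ⟨p⟩; simp [vadd_mk]
  add_vadd s t := by rintro ⟨p⟩; simp [vadd_mk, add_assoc, add_comm s]

lemma continuous_vadd_const (T : Susp X) : Continuous fun t : Rd d => t +ᵥ T := by
  induction T using Quot.ind with
  | mk p =>
    exact continuous_quot_mk.comp (continuous_const.prodMk (continuous_const.add continuous_id))

lemma mk_eq_mk_iff_of_isAperiodic (hX : IsAperiodic X) {ω : X} {x y : Rd d} :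
    Quot.mk (suspRel X) (ω, x) = Quot.mk (suspRel X) (ω, y) ↔ x = y := by
  refine ⟨fun hxy => ?_, fun hxy => hxy ▸ rfl⟩
  obtain ⟨n, h₁, h₂⟩ := mk_eq_mk_iff.mp hxy
  rw [hX ω ω.2 n h₁.symm, toRd_zero, sub_zero] at h₂
  exact h₂.symm

lemma vadd_left_injective (hX : IsAperiodic X) (T : Susp X) :
    Function.Injective fun t : Rd d => t +ᵥ T := by
  induction T using Quot.ind with
  | mk p => exact fun s t hst => add_left_cancel ((mk_eq_mk_iff_of_isAperiodic hX).mp hst)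

lemma exists_eq_toRd_of_vadd_iota_eq {v : Rd d} {ω ω' : X}
    (h : v +ᵥ iota X ω = iota X ω') : ∃ m : Zd d, v = toRd m := by
  obtain ⟨m, -, hm⟩ := mk_eq_mk_iff.mp h
  exact ⟨m, by simpa [sub_eq_zero, eq_comm] using hm⟩

lemma injOn_mk_ball (z : Rd d) :
    Set.InjOn (Quot.mk (suspRel X)) (Set.univ ×ˢ Metric.ball z 2⁻¹) := by
  rintro p ⟨-, hp⟩ q ⟨-, hq⟩ hpq
  obtain ⟨n, h₁, h₂⟩ := mk_eq_mk_iff.mp hpq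
  have hn : n = 0 := eq_zero_of_norm_toRd_lt_one <| by
    rw [show toRd n = p.2 - q.2 by rw [h₂]; abel]
    calc ‖p.2 - q.2‖ = dist p.2 q.2 := (dist_eq_norm _ _).symm
      _ ≤ dist p.2 z + dist q.2 z := dist_triangle_right _ _ _
      _ < 2⁻¹ + 2⁻¹ := add_lt_add hp hq
      _ = 1 := by norm_num
  rw [hn, shift_zero] at h₁
  rw [hn, toRd_zero, sub_zero] at h₂
  exact Prod.ext (Subtype.ext h₁.symm) h₂.symm

namespace IsSubshift

def shiftOn (hX : IsSubshift X) (n : Zd d) (ω : X) : X :=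
  ⟨shift n ω, hX.shift_mem n ω ω.2⟩

lemma continuous_shiftOn (hX : IsSubshift X) (n : Zd d) : Continuous (hX.shiftOn n) :=
  ((continuous_shift n).comp continuous_subtype_val).subtype_mk _

lemma vadd_iota (hX : IsSubshift X) (n : Zd d) (ω : X) :
    toRd n +ᵥ iota X ω = iota X (hX.shiftOn n ω) :=
  Quot.sound ⟨n, rfl, by simp⟩

lemma isOpenQuotientMap_mk (hX : IsSubshift X) : IsOpenQuotientMap (Quot.mk (suspRel X)) := by
  refine ⟨Quot.mk_surjective, continuous_quot_mk, fun U hU => ?_⟩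
  rw [← isQuotientMap_quot_mk.isOpen_preimage]
  have : Quot.mk (suspRel X) ⁻¹' (Quot.mk (suspRel X) '' U) =
      ⋃ n : Zd d, (fun p : X × Rd d => (hX.shiftOn n p.1, p.2 - toRd n)) ⁻¹' U := by
    ext p
    simp only [Set.mem_preimage, Set.mem_image, Set.mem_iUnion, mk_eq_mk_iff]
    constructor
    · rintro ⟨q, hqU, n, h₁, h₂⟩
      exact ⟨-n, by convert hqU using 1; ext <;> simp [shiftOn, h₁, h₂, shift_shift]⟩
    · rintro ⟨n, hn⟩
      exact ⟨_, hn, -n, by simp [shiftOn, shift_shift], by simp⟩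
  rw [this]
  exact isOpen_iUnion fun n => hU.preimage
    (((hX.continuous_shiftOn n).comp continuous_fst).prodMk (continuous_snd.sub continuous_const))

lemma continuousVAdd (hX : IsSubshift X) : ContinuousVAdd (Rd d) (Susp X) := by
  refine ⟨(IsOpenQuotientMap.id.prodMap hX.isOpenQuotientMap_mk).continuous_comp_iff.mp ?_⟩
  exact continuous_quot_mk.comp
    ((continuous_fst.comp continuous_snd).prodMk
      ((continuous_snd.comp continuous_snd).add continuous_fst))

lemma t2Space [T2Space A] (hX : IsSubshift X) : T2Space (Susp X) := by
  rw [t2Space_iff_of_isOpenQuotientMap hX.isOpenQuotientMap_mk]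
  have : {q : (X × Rd d) × (X × Rd d) | Quot.mk (suspRel X) q.1 = Quot.mk (suspRel X) q.2} =
      ⋃ n : Zd d, {q | (q.2.1 : Zd d → A) = shift n q.1.1 ∧ q.1.2 - q.2.2 = toRd n} := by
    ext q
    simp only [Set.mem_ofPred_eq, Set.mem_iUnion, mk_eq_mk_iff, suspRel]
    refine exists_congr fun n => and_congr_right fun _ => ?_
    rw [eq_sub_iff_add_eq, sub_eq_iff_eq_add, eq_comm, add_comm]
  rw [this]
  refine LocallyFinite.isClosed_iUnion (fun q => ?_) fun n => ?_
  · refine ⟨{q' | ‖(q'.1.2 - q'.2.2) - (q.1.2 - q.2.2)‖ < 1},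
      (isOpen_lt (by fun_prop) continuous_const).mem_nhds (by simp), ?_⟩
    refine (finite_setOf_norm_toRd_le (‖q.1.2 - q.2.2‖ + 1)).subset ?_
    rintro n ⟨q', ⟨-, hn⟩, hq'⟩
    simp only [Set.mem_ofPred_eq, hn] at hq' ⊢
    linarith [norm_le_insert' (toRd n) (q.1.2 - q.2.2)]
  · exact (isClosed_eq (by fun_prop) ((continuous_shift n).comp (by fun_prop))).inter
      (isClosed_eq (by fun_prop) continuous_const)

lemma compactSpace_coe [CompactSpace A] (hX : IsSubshift X) : CompactSpace X :=
  isCompact_iff_compactSpace.mp hX.closed.isCompact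

lemma compactSpace [CompactSpace A] (hX : IsSubshift X) : CompactSpace (Susp X) := by
  have := hX.compactSpace_coe
  let K : Set (Rd d) := WithLp.toLp 2 '' Set.univ.pi fun _ => Set.Icc 0 1
  have hK : IsCompact K :=
    (isCompact_univ_pi fun _ => isCompact_Icc).image (PiLp.continuous_toLp 2 _)
  refine ⟨?_⟩
  convert (isCompact_univ.prod hK).image (continuous_quot_mk (r := suspRel X))
  refine (Set.eq_univ_of_forall fun T => ?_).symm
  obtain ⟨⟨ω, x⟩, rfl⟩ := Quot.mk_surjective T
  let m : Zd d := fun i => ⌊x i⌋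
  refine ⟨(hX.shiftOn m ω, x - toRd m), ⟨Set.mem_univ _, ?_⟩,
    (Quot.sound ⟨m, rfl, rfl⟩).symm⟩
  refine ⟨fun i => Int.fract (x i),
    fun i _ => ⟨Int.fract_nonneg _, (Int.fract_lt_one _).le⟩, ?_⟩
  ext i; simp [m, Int.self_sub_floor]

lemma isOpenEmbedding_restrict_mk (hX : IsSubshift X) (z : Rd d) :
    IsOpenEmbedding ((Set.univ ×ˢ Metric.ball z 2⁻¹).domRestrict (Quot.mk (suspRel X))) := by
  have hU : IsOpen (Set.univ ×ˢ Metric.ball z 2⁻¹ : Set (X × Rd d)) :=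
    isOpen_univ.prod Metric.isOpen_ball
  exact .of_continuous_injective_isOpenMap (continuous_quot_mk.comp continuous_subtype_val)
    (injOn_mk_ball z).injective (hX.isOpenQuotientMap_mk.isOpenMap.comp hU.isOpenMap_subtype_val)

lemma continuous_of_continuous_vadd [DiscreteTopology A] (hX : IsSubshift X)
    (hap : IsAperiodic X) {Y : Type*} [TopologicalSpace Y] [LocallyConnectedSpace Y]
    {f : Y → Rd d} (S : Susp X) (hf : Continuous fun y => f y +ᵥ S) : Continuous f := by
  obtain ⟨⟨ω, z₀⟩, rfl⟩ := Quot.mk_surjective S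
  refine continuous_iff_continuousAt.2 fun y₀ => ?_
  set z := z₀ + f y₀
  set e := (Set.univ ×ˢ Metric.ball z 2⁻¹).domRestrict (Quot.mk (suspRel X))
  have he := hX.isOpenEmbedding_restrict_mk z
  have hz : ((ω, z) : X × Rd d) ∈ Set.univ ×ˢ Metric.ball z 2⁻¹ :=
    ⟨Set.mem_univ _, Metric.mem_ball_self (by norm_num)⟩
  have : Nonempty (Set.univ ×ˢ Metric.ball z 2⁻¹ : Set (X × Rd d)) := ⟨⟨_, hz⟩⟩
  set φ := he.toOpenPartialHomeomorph e
  set N :=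
    connectedComponentIn ((fun y => f y +ᵥ Quot.mk (suspRel X) (ω, z₀)) ⁻¹' Set.range e) y₀
  have hNopen : IsOpen N := (he.isOpen_range.preimage hf).connectedComponentIn
  have hy₀N : y₀ ∈ N := mem_connectedComponentIn ⟨⟨_, hz⟩, rfl⟩
  have hNe : ∀ y ∈ N, f y +ᵥ Quot.mk (suspRel X) (ω, z₀) ∈ Set.range e :=
    fun _ hy => connectedComponentIn_subset _ y₀ hy
  let γ : Y → X × Rd d := fun y => (φ.symm (f y +ᵥ Quot.mk (suspRel X) (ω, z₀))).1
  have hγ : ContinuousOn γ N := continuous_subtype_val.comp_continuousOn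
    (φ.continuousOn_symm.comp hf.continuousOn fun y hy => by
      rw [he.toOpenPartialHomeomorph_target]; exact hNe y hy)
  have hγmk : ∀ y ∈ N, Quot.mk (suspRel X) (γ y) = Quot.mk (suspRel X) (ω, z₀ + f y) :=
    fun y hy => he.toOpenPartialHomeomorph_right_inv e (hNe y hy)
  have hγball : ∀ y, γ y ∈ Set.univ ×ˢ Metric.ball z 2⁻¹ := fun y => (φ.symm _).2
  -- `X` is totally disconnected, so the `X`-coordinate of the lift is constant on `N`.
  have hfst : ∀ y ∈ N, (γ y).1 = ω := by
    have hsub := ((isPreconnected_connectedComponentIn (F := _) (x := y₀)).image _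
      (continuous_fst.comp_continuousOn hγ)).subsingleton
    have hγ₀ : γ y₀ = (ω, z) := injOn_mk_ball z (hγball y₀) hz (hγmk y₀ hy₀N)
    exact fun y hy =>
      (hsub ⟨y, hy, rfl⟩ ⟨y₀, hy₀N, rfl⟩).trans (congrArg Prod.fst hγ₀)
  have hfγ : ∀ y ∈ N, f y = (γ y).2 - z₀ := fun y hy => by
    have := hγmk y hy
    rw [← Prod.mk.eta (p := γ y), hfst y hy, mk_eq_mk_iff_of_isAperiodic hap] at this
    rw [this]; abel
  exact ((hγ.continuousAt (hNopen.mem_nhds hy₀N)).snd.sub continuousAt_const).congr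
    (eventually_of_mem (hNopen.mem_nhds hy₀N) fun y hy => (hfγ y hy).symm)

end IsSubshift

end Suspension

namespace IsCocycleFor

variable {d : ℕ} {A A' : Type*} [TopologicalSpace A] [TopologicalSpace A']
  {X : Set (Zd d → A)} {X' : Set (Zd d → A')} {h : Susp X ≃ₜ Susp X'}
  {c : Susp X × Rd d → Rd d}

lemma apply_eq_iff (hc : IsCocycleFor h c) (hap' : IsAperiodic X') {T : Susp X}
    {x v : Rd d} : c (T, x) = v ↔ h (x +ᵥ T) = v +ᵥ h T := by
  rw [hc]; exact (vadd_left_injective hap' (h T)).eq_iff.symm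

lemma apply_zero (hc : IsCocycleFor h c) (hap' : IsAperiodic X') (T : Susp X) :
    c (T, 0) = 0 :=
  (hc.apply_eq_iff hap').2 (by simp)

lemma apply_add (hc : IsCocycleFor h c) (hap' : IsAperiodic X') (T : Susp X) (x y : Rd d) :
    c (T, x + y) = c (y +ᵥ T, x) + c (T, y) :=
  (hc.apply_eq_iff hap').2 (by rw [add_vadd, hc, hc, add_vadd])

lemma continuous_apply [DiscreteTopology A'] (hc : IsCocycleFor h c) (hX' : IsSubshift X')
    (hap' : IsAperiodic X') (T : Susp X) : Continuous fun x => c (T, x) :=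
  hX'.continuous_of_continuous_vadd hap' (h T) <|
    (h.continuous.comp (continuous_vadd_const T)).congr fun x => hc T x

lemma eventually_forall_norm_apply_ne [CompactSpace A] [T2Space A'] (hc : IsCocycleFor h c)
    (hX : IsSubshift X) (hX' : IsSubshift X') (hap' : IsAperiodic X') {r : ℝ} (hr : 0 < r) :
    ∀ᶠ x in 𝓝 (0 : Rd d), ∀ T, ‖c (T, x)‖ ≠ r := by
  have := hX.compactSpace
  have := hX'.t2Space
  have := hX.continuousVAdd
  have := hX'.continuousVAdd
  let Z : Set (Susp X × Rd d × Rd d) :=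
    {p | h (p.2.1 +ᵥ p.1) = p.2.2 +ᵥ h p.1} ∩
      Set.univ ×ˢ Metric.closedBall 0 1 ×ˢ Metric.sphere 0 r
  have hZ : IsCompact Z :=
    (isCompact_univ.prod ((isCompact_closedBall 0 1).prod (isCompact_sphere 0 r))).inter_left
      (isClosed_eq (by fun_prop) (by fun_prop))
  have h0 : (0 : Rd d) ∉ (fun p => p.2.1) '' Z := by
    rintro ⟨⟨T, x, u⟩, ⟨hTxu, -, -, hu⟩, rfl⟩
    have hu0 : u = 0 := vadd_left_injective hap' (h T) (by simpa [eq_comm] using hTxu)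
    simp [hu0, hr.ne] at hu
  filter_upwards [(hZ.image (by fun_prop)).isClosed.isOpen_compl.mem_nhds h0,
    Metric.closedBall_mem_nhds 0 one_pos] with x hxZ hx T hT
  exact hxZ ⟨(T, x, c (T, x)), ⟨hc T x, Set.mem_univ _, hx, by simpa using hT⟩, rfl⟩

lemma exists_pos_forall_norm_apply_lt [CompactSpace A] [DiscreteTopology A']
    (hc : IsCocycleFor h c) (hX : IsSubshift X) (hX' : IsSubshift X') (hap' : IsAperiodic X')
    {r : ℝ} (hr : 0 < r) : ∃ ε > 0, ∀ T x, ‖x‖ < ε → ‖c (T, x)‖ < r := by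
  obtain ⟨ε, hε, hball⟩ :=
    Metric.eventually_nhds_iff_ball.1 (hc.eventually_forall_norm_apply_ne hX hX' hap' hr)
  refine ⟨ε, hε, fun T x hx => ?_⟩
  by_contra! hle
  obtain ⟨y, hy, hyr⟩ := (convex_ball (0 : Rd d) ε).isPreconnected.intermediate_value
    (Metric.mem_ball_self hε) (mem_ball_zero_iff.2 hx)
    (hc.continuous_apply hX' hap' T).norm.continuousOn
    ⟨by simp [hc.apply_zero hap', hr.le], hle⟩
  exact hball y hy T hyr

lemma norm_apply_nsmul_le (hc : IsCocycleFor h c) (hap' : IsAperiodic X') {y : Rd d} {r : ℝ}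
    (hy : ∀ T, ‖c (T, y)‖ ≤ r) (n : ℕ) (T : Susp X) : ‖c (T, n • y)‖ ≤ n * r := by
  induction n generalizing T with
  | zero => simp [hc.apply_zero hap']
  | succ n ih =>
    rw [succ_nsmul, hc.apply_add hap', Nat.cast_succ, add_mul, one_mul]
    exact (norm_add_le _ _).trans (add_le_add (ih _) (hy T))

lemma exists_bound [CompactSpace A] [DiscreteTopology A'] (hc : IsCocycleFor h c)
    (hX : IsSubshift X) (hX' : IsSubshift X') (hap' : IsAperiodic X') (R : ℝ) :
    ∃ M, ∀ T x, ‖x‖ ≤ R → ‖c (T, x)‖ ≤ M := by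
  obtain ⟨ε, hε, hsmall⟩ := hc.exists_pos_forall_norm_apply_lt hX hX' hap' one_pos
  set N : ℕ := ⌈R / ε⌉₊ + 1
  have hN : (0 : ℝ) < N := by positivity
  have hRN : R / N < ε := by
    rw [div_lt_iff₀ hN, mul_comm, ← div_lt_iff₀ hε]
    exact (Nat.le_ceil _).trans_lt (by simp [N])
  refine ⟨N, fun T x hx => ?_⟩
  have hy : ‖(N : ℝ)⁻¹ • x‖ < ε := by
    rw [norm_smul, norm_inv, Real.norm_natCast, inv_mul_eq_div]
    exact (div_le_div_of_nonneg_right hx hN.le).trans_lt hRN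
  have hxN : x = N • ((N : ℝ)⁻¹ • x) := by
    rw [← Nat.cast_smul_eq_nsmul ℝ, smul_inv_smul₀ hN.ne']
  rw [hxN]
  simpa using hc.norm_apply_nsmul_le hap' (fun T => (hsmall T _ hy).le) N T

lemma exists_apply_iota_eq_toRd (hc : IsCocycleFor h c) (hX : IsSubshift X)
    (hι : ∀ ω, h (iota X ω) ∈ Set.range (iota X')) (ω : X) (n : Zd d) :
    ∃ m : Zd d, c (iota X ω, toRd n) = toRd m := by
  obtain ⟨ω', hω'⟩ := hι ω
  obtain ⟨ω'', hω''⟩ := hι (hX.shiftOn n ω)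
  have := hc (iota X ω) (toRd n)
  rw [hX.vadd_iota, ← hω', ← hω''] at this
  exact exists_eq_toRd_of_vadd_iota_eq this.symm

lemma isClosed_setOf_apply_iota_eq [T2Space A'] (hc : IsCocycleFor h c) (hX : IsSubshift X)
    (hX' : IsSubshift X') (hap' : IsAperiodic X') (n : Zd d) (v : Rd d) :
    IsClosed {ω : X | c (iota X ω, toRd n) = v} := by
  have := hX'.t2Space
  have := hX'.continuousVAdd
  have hι : Continuous (iota X) := continuous_quot_mk.comp (continuous_id.prodMk continuous_const)
  simp_rw [hc.apply_eq_iff hap', hX.vadd_iota]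
  exact isClosed_eq (h.continuous.comp (hι.comp (hX.continuous_shiftOn n)))
    ((h.continuous.comp hι).const_vadd v)

lemma isLocallyConstant_and_finite_range_apply_iota [CompactSpace A] [DiscreteTopology A']
    (hc : IsCocycleFor h c) (hX : IsSubshift X) (hX' : IsSubshift X') (hap' : IsAperiodic X')
    (hι : ∀ ω, h (iota X ω) ∈ Set.range (iota X')) (n : Zd d) :
    IsLocallyConstant (fun ω : X => c (iota X ω, toRd n)) ∧
      (Set.range fun ω : X => c (iota X ω, toRd n)).Finite := by
  obtain ⟨M, hM⟩ := hc.exists_bound hX hX' hap' ‖toRd n‖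
  have hfin : (Set.range fun ω : X => c (iota X ω, toRd n)).Finite := by
    refine ((finite_setOf_norm_toRd_le M).image toRd).subset ?_
    rintro _ ⟨ω, rfl⟩
    obtain ⟨m, hm⟩ := hc.exists_apply_iota_eq_toRd hX hι ω n
    exact ⟨m, by rw [Set.mem_ofPred_eq, ← hm]; exact hM _ _ le_rfl, hm.symm⟩
  exact ⟨isLocallyConstant_of_isClosed_fiber hfin
    fun v => hc.isClosed_setOf_apply_iota_eq hX hX' hap' n v, hfin⟩

end IsCocycleFor

theorem cocycle_return_vectors_locally_constant_general
    {d : ℕ}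
    {A A' : Type*} [Fintype A] [TopologicalSpace A] [DiscreteTopology A]
    [TopologicalSpace A'] [DiscreteTopology A']
    (X : Set (Zd d → A)) (X' : Set (Zd d → A'))
    (hX : IsSubshift X) (hX' : IsSubshift X')
    (hX'ap : IsAperiodic X')
    (h : Susp X ≃ₜ Susp X')
    (htrans : ⇑h '' Set.range (iota X) = Set.range (iota X'))
    (c : Susp X × Rd d → Rd d) (hc : IsCocycleFor h c) :
    (∀ (ω : X) (n : Zd d), ∃ m : Zd d, c (iota X ω, toRd n) = toRd m) ∧
    (∀ lam : ℝ, 0 < lam → ∃ ν : ℕ, ∀ n : Zd d, ‖toRd n‖ ≤ lam →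
      ∀ ω₁ ω₂ : X, (∀ j ∈ box d ν, (ω₁ : Zd d → A) j = (ω₂ : Zd d → A) j) →
        c (iota X ω₁, toRd n) = c (iota X ω₂, toRd n)) ∧
    (∀ n : Zd d,
      IsLocallyConstant (fun ω : X => c (iota X ω, toRd n)) ∧
      (Set.range (fun ω : X => c (iota X ω, toRd n))).Finite) := by
  have := hX.compactSpace_coe
  have hι : ∀ ω, h (iota X ω) ∈ Set.range (iota X') :=
    fun ω => htrans ▸ Set.mem_image_of_mem h (Set.mem_range_self ω)
  have hloc := hc.isLocallyConstant_and_finite_range_apply_iota hX hX' hX'ap hι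
  refine ⟨hc.exists_apply_iota_eq_toRd hX hι, fun lam _ => ?_, hloc⟩
  choose ν hν using fun n => (hloc n).1.exists_box_forall_eq
  refine ⟨(finite_setOf_norm_toRd_le lam).toFinset.sup ν,
    fun n hn ω₁ ω₂ h₁₂ => hν n ω₁ ω₂ fun j hj => h₁₂ j ?_⟩
  exact box_mono (Finset.le_sup (f := ν) ((Set.Finite.mem_toFinset _).2 hn)) hj

theorem cocycle_return_vectors_locally_constant
    {d : ℕ} (hd : 1 ≤ d)
    {A A' : Type*} [Fintype A] [Nonempty A] [TopologicalSpace A] [DiscreteTopology A]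
    [Fintype A'] [Nonempty A'] [TopologicalSpace A'] [DiscreteTopology A']
    (X : Set (Zd d → A)) (X' : Set (Zd d → A'))
    (hX : IsSubshift X) (hX' : IsSubshift X')
    (hXmin : IsMinimal X) (hX'min : IsMinimal X')
    (hXap : IsAperiodic X) (hX'ap : IsAperiodic X')
    (h : Susp X ≃ₜ Susp X')
    (htrans : ⇑h '' Set.range (iota X) = Set.range (iota X'))
    (c : Susp X × Rd d → Rd d) (hc : IsCocycleFor h c) :
    (∀ (ω : X) (n : Zd d), ∃ m : Zd d, c (iota X ω, toRd n) = toRd m) ∧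
    (∀ lam : ℝ, 0 < lam → ∃ ν : ℕ, ∀ n : Zd d, ‖toRd n‖ ≤ lam →
      ∀ ω₁ ω₂ : X, (∀ j ∈ box d ν, (ω₁ : Zd d → A) j = (ω₂ : Zd d → A) j) →
        c (iota X ω₁, toRd n) = c (iota X ω₂, toRd n)) ∧
    (∀ n : Zd d,
      IsLocallyConstant (fun ω : X => c (iota X ω, toRd n)) ∧
      (Set.range (fun ω : X => c (iota X ω, toRd n))).Finite) :=
  cocycle_return_vectors_locally_constant_general X X' hX hX' hX'ap h htrans c hc
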